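/- arXiv:2409.04661 — 3 statements merged into one kernel-verified Lean document; each statement's English description precedes it below -/
import Mathlib

section
/- Let p be an odd prime, let d ≥ 1 be an integer, and let r be a unit modulo p² with r ≡ 1 (mod p). Then the hyper Kloosterman sum Kl_d(r; p²) is nonzero. -/
open scoped BigOperators

/-- `e(x) = exp(2πix)`. -/
noncomputable def e (x : ℂ) : ℂ := Complex.exp (2 * Real.pi * Complex.I * x)

/-- The hyper Kloosterman sum of dimension `d` and modulus `M` at a unit `r` mod `M`:
`Kl_d(r; M) = Σ_{n₁⋯n_d ≡ r (M)} e((n₁+⋯+n_d)/M)`. -/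
noncomputable def Kl (d M : ℕ) (r : (ZMod M)ˣ) : ℂ :=
  ∑ᶠ n : Fin d → (ZMod M)ˣ,
    if (∏ i, n i) = r then e (((∑ i, ((n i : ZMod M)).val : ℕ) : ℂ) / M) else 0

/-!
Every unit of `ZMod (p²)` is uniquely `τ(a) (1 + p t)`, where `a` is a unit mod `p`,
`t ∈ ZMod p` and `τ(a) = ãᵖ` is the (multiplicative) Teichmüller lift. For `r = 1 + p s`
the condition `n₁ ⋯ n_d = r` splits into `∏ aᵢ = 1` and `∑ tᵢ = s`, while
`e(nᵢ/p²) = e(τ(aᵢ)/p²) e(aᵢtᵢ/p)`. The sum over the `tᵢ` vanishes unless all `aᵢ`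
equal one `b`, which leaves `Kl_d(r; p²) = p^(d-1) ∑_{bᵈ = 1} e(d τ(b)/p²) e(b s/p)`:
a nonempty sum of fewer than `p` roots of unity of order `p²`. Such a sum cannot vanish,
since otherwise the cyclotomic polynomial `Φ_{p²}` would divide `∑ X^mᵢ`, and evaluating
at `1` would make `p` divide the number of terms.
-/

open Finset

theorem AddChar.map_sum_eq_prod {ι A M : Type*} [AddCommMonoid A] [CommMonoid M]
    (ψ : AddChar A M) (s : Finset ι) (f : ι → A) :
    ψ (∑ i ∈ s, f i) = ∏ i ∈ s, ψ (f i) := by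
  induction s using Finset.cons_induction with
  | empty => simp
  | cons i s hi ih => rw [sum_cons, prod_cons, map_add_eq_mul, ih]

theorem AddChar.sum_ite_sum_eq {R R' : Type*} [CommRing R] [Fintype R] [DecidableEq R]
    [CommRing R'] [IsDomain R'] {χ : AddChar R R'} (hχ : χ.IsPrimitive) (n : ℕ)
    (a : Fin (n + 1) → R) (s : R) :
    ∑ t : Fin (n + 1) → R, (if ∑ i, t i = s then χ (∑ i, a i * t i) else 0) =
      if ∀ i, a i = a 0 then (Fintype.card R : R') ^ n * χ (a 0 * s) else 0 := by
  have sum_head (t : Fin n → R) :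
      ∑ t₀ : R, (if t₀ + ∑ i, t i = s then χ (a 0 * t₀ + ∑ i, a i.succ * t i) else 0) =
        χ (a 0 * s) * ∏ i, χ (t i * (a i.succ - a 0)) := by
    simp_rw [← eq_sub_iff_add_eq, sum_ite_eq', mem_univ, if_true, ← map_sum_eq_prod,
      ← map_add_eq_mul]
    congr 1
    simp only [mul_sub, sub_mul, mul_sum, sum_sub_distrib, mul_comm (t _)]
    ring
  rw [← (Fin.consEquiv fun _ => R).sum_comp, Fintype.sum_prod_type, sum_comm]
  simp only [Fin.consEquiv_apply, Fin.sum_univ_succ, Fin.cons_zero, Fin.cons_succ]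
  rw [sum_congr rfl fun t _ => sum_head t, ← mul_sum,
    ← Fintype.prod_sum fun (i : Fin n) (x : R) => χ (x * (a i.succ - a 0))]
  simp only [sum_mulShift _ hχ, sub_eq_zero, Nat.cast_ite, Nat.cast_zero, Fintype.prod_ite_zero,
    prod_const, card_univ, Fintype.card_fin, Fin.forall_fin_succ, true_and]
  split_ifs <;> ring

theorem Fin.sum_ite_forall_eq_apply_zero {α M : Type*} [Fintype α] [DecidableEq α]
    [AddCommMonoid M] (n : ℕ) (f : (Fin (n + 1) → α) → M) :
    ∑ a : Fin (n + 1) → α, (if ∀ i, a i = a 0 then f a else 0) = ∑ b, f fun _ => b := by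
  rw [← (Fin.consEquiv fun _ => α).sum_comp, Fintype.sum_prod_type]
  refine sum_congr rfl fun b _ => ?_
  have hconst (a : Fin n → α) : (∀ i, a i = b) ↔ a = fun _ => b := funext_iff.symm
  simp only [Fin.consEquiv, Equiv.coe_fn_mk, Fin.forall_fin_succ, Fin.cons_zero, Fin.cons_succ,
    true_and, hconst, Fintype.sum_ite_eq']
  congr 1
  exact Fin.cons_self_tail fun _ => b

open Polynomial in
theorem IsPrimitiveRoot.sum_pow_ne_zero {K ι : Type*} [Field K] [CharZero K] {p k : ℕ}
    [Fact p.Prime] {ζ : K} (hζ : IsPrimitiveRoot ζ (p ^ (k + 1))) {s : Finset ι}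
    (m : ι → ℕ) (hs : s.Nonempty) (hsp : #s < p) : ∑ i ∈ s, ζ ^ m i ≠ 0 := by
  intro h
  have hpos : 0 < p ^ (k + 1) := pow_pos (Fact.out : p.Prime).pos _
  have hdvd : cyclotomic (p ^ (k + 1)) ℤ ∣ ∑ i ∈ s, X ^ m i := by
    rw [cyclotomic_eq_minpoly hζ hpos]
    exact minpoly.isIntegrallyClosed_dvd (hζ.isIntegral hpos) (by simpa [map_sum] using h)
  have hp_dvd := eval_dvd (x := 1) hdvd
  rw [eval_one_cyclotomic_prime_pow, eval_finsetSum] at hp_dvd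
  simp only [eval_pow, eval_X, one_pow, sum_const, nsmul_eq_mul, mul_one] at hp_dvd
  have := Nat.le_of_dvd hs.card_pos (Int.natCast_dvd_natCast.mp hp_dvd)
  omega

theorem e_natCast_div (N M : ℕ) [NeZero M] :
    e ((N : ℂ) / M) = ZMod.stdAddChar (N : ZMod M) := by
  rw [e, ZMod.stdAddChar_apply, ZMod.toCircle_natCast]
  ring_nf

theorem Kl_eq_sum_stdAddChar (d M : ℕ) [NeZero M] (r : (ZMod M)ˣ) :
    Kl d M r = ∑ n : Fin d → (ZMod M)ˣ,
      if ∏ i, n i = r then ∏ i, ZMod.stdAddChar (n i : ZMod M) else 0 := by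
  rw [Kl, finsum_eq_sum_of_fintype]
  refine sum_congr rfl fun n _ => ?_
  rw [e_natCast_div, Nat.cast_sum, ← AddChar.map_sum_eq_prod]
  simp only [ZMod.natCast_zmod_val]

namespace ZMod

theorem sum_stdAddChar_ne_zero {p k : ℕ} [Fact p.Prime] (hk : k ≠ 0) {ι : Type*}
    {s : Finset ι} (x : ι → ZMod (p ^ k)) (hs : s.Nonempty) (hsp : #s < p) :
    ∑ i ∈ s, stdAddChar (x i) ≠ 0 := by
  obtain ⟨k, rfl⟩ : ∃ j, k = j + 1 := ⟨k - 1, by omega⟩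
  have hζ := Complex.isPrimitiveRoot_exp (p ^ (k + 1)) (NeZero.ne _)
  convert hζ.sum_pow_ne_zero (fun i => (x i).val) hs hsp using 2 with i
  rw [stdAddChar_apply, toCircle_apply, ← Complex.exp_nat_mul]
  push_cast
  ring_nf

section SquareModulus

variable {p : ℕ}

abbrev reduceSq : ZMod (p ^ 2) →+* ZMod p := castHom (dvd_pow_self p two_ne_zero) (ZMod p)

theorem natCast_mul_self_eq_zero : (p : ZMod (p ^ 2)) * p = 0 := by
  rw [← Nat.cast_mul, ← sq, natCast_self]

theorem natCast_dvd_sub_of_reduceSq_eq {x y : ZMod (p ^ 2)} (h : reduceSq x = reduceSq y) :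
    (p : ZMod (p ^ 2)) ∣ x - y := by
  obtain ⟨i, rfl⟩ := intCast_surjective x
  obtain ⟨j, rfl⟩ := intCast_surjective y
  rw [map_intCast, map_intCast, intCast_eq_intCast_iff_dvd_sub] at h
  obtain ⟨k, hk⟩ := h
  exact ⟨-k, by rw [← Int.cast_sub, ← neg_sub, hk]; push_cast; ring⟩

theorem natCast_mul_eq_of_reduceSq_eq {x y : ZMod (p ^ 2)} (h : reduceSq x = reduceSq y) :
    (p : ZMod (p ^ 2)) * x = p * y := by
  obtain ⟨c, hc⟩ := natCast_dvd_sub_of_reduceSq_eq h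
  linear_combination (p : ZMod (p ^ 2)) * hc + c * natCast_mul_self_eq_zero

theorem pow_eq_of_reduceSq_eq {x y : ZMod (p ^ 2)} (h : reduceSq x = reduceSq y) :
    x ^ p = y ^ p := by
  have := dvd_sub_pow_of_dvd_sub (natCast_dvd_sub_of_reduceSq_eq h) 1
  rwa [pow_one, ← Nat.cast_pow, natCast_self, zero_dvd_iff, sub_eq_zero] at this

section

variable [NeZero p]

theorem reduceSq_natCast_val (t : ZMod p) : reduceSq (t.val : ZMod (p ^ 2)) = t := by
  rw [map_natCast, natCast_zmod_val]

theorem natCast_mul_eq_zero_iff {x : ZMod (p ^ 2)} :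
    (p : ZMod (p ^ 2)) * x = 0 ↔ reduceSq x = 0 := by
  obtain ⟨j, rfl⟩ := intCast_surjective x
  rw [map_intCast, ← Int.cast_natCast, ← Int.cast_mul, intCast_zmod_eq_zero_iff_dvd,
    intCast_zmod_eq_zero_iff_dvd, Nat.cast_pow, sq,
    Int.mul_dvd_mul_iff_left (Int.natCast_ne_zero.mpr (NeZero.ne p))]

theorem stdAddChar_natCast_mul (x : ZMod (p ^ 2)) :
    stdAddChar ((p : ZMod (p ^ 2)) * x) = stdAddChar (reduceSq x) := by
  obtain ⟨j, rfl⟩ := intCast_surjective x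
  have hp : (p : ℂ) ≠ 0 := Nat.cast_ne_zero.mpr (NeZero.ne p)
  rw [map_intCast, ← Int.cast_natCast, ← Int.cast_mul, stdAddChar_coe, stdAddChar_coe]
  congr 1
  push_cast
  field_simp

def principalUnit : AddChar (ZMod p) (ZMod (p ^ 2))ˣ where
  toFun t := ⟨1 + p * t.val, 1 - p * t.val,
    by linear_combination -(t.val : ZMod (p ^ 2)) ^ 2 * natCast_mul_self_eq_zero,
    by linear_combination -(t.val : ZMod (p ^ 2)) ^ 2 * natCast_mul_self_eq_zero⟩
  map_zero_eq_one' := by ext; simp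
  map_add_eq_mul' s t := by
    ext
    have := natCast_mul_eq_of_reduceSq_eq (x := ((s + t).val : ZMod (p ^ 2)))
      (y := s.val + t.val) (by simp only [map_add, reduceSq_natCast_val])
    simp only [Units.val_mul]
    linear_combination this - (s.val * t.val : ZMod (p ^ 2)) * natCast_mul_self_eq_zero

end

variable [Fact p.Prime]

def teichmuller : ZMod p →* ZMod (p ^ 2) where
  toFun a := (a.val : ZMod (p ^ 2)) ^ p
  map_one' := by rw [val_one, Nat.cast_one, one_pow]
  map_mul' a b := by
    rw [← mul_pow]
    exact pow_eq_of_reduceSq_eq (by simp only [map_mul, reduceSq_natCast_val])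

theorem reduceSq_teichmuller (a : ZMod p) : reduceSq (teichmuller a) = a := by
  rw [teichmuller, MonoidHom.coe_mk, OneHom.coe_mk, map_pow, reduceSq_natCast_val, pow_card]

def mkUnit (a : (ZMod p)ˣ) (t : ZMod p) : (ZMod (p ^ 2))ˣ :=
  Units.map teichmuller a * principalUnit t

theorem coe_mkUnit (a : (ZMod p)ˣ) (t : ZMod p) :
    (mkUnit a t : ZMod (p ^ 2)) =
      teichmuller (a : ZMod p) + p * (teichmuller (a : ZMod p) * t.val) := by
  simp only [mkUnit, principalUnit, Units.val_mul, Units.coe_map, AddChar.coe_mk]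
  ring

theorem reduceSq_mkUnit (a : (ZMod p)ˣ) (t : ZMod p) :
    reduceSq (mkUnit a t : ZMod (p ^ 2)) = a := by
  rw [coe_mkUnit, map_add, map_mul, map_natCast, natCast_self, zero_mul, add_zero,
    reduceSq_teichmuller]

theorem mkUnit_injective : Function.Injective (Function.uncurry (mkUnit (p := p))) := by
  rintro ⟨a, s⟩ ⟨b, t⟩ h
  obtain rfl : a = b := Units.ext <| by
    simpa only [Function.uncurry_apply_pair, reduceSq_mkUnit] using
      congrArg (fun u : (ZMod (p ^ 2))ˣ => reduceSq (u : ZMod (p ^ 2))) h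
  have hst := congrArg Units.val (mul_left_cancel h)
  simp only [principalUnit, AddChar.coe_mk, add_right_inj] at hst
  have hpst : (p : ZMod (p ^ 2)) * (s.val - t.val) = 0 := by linear_combination hst
  rw [natCast_mul_eq_zero_iff, map_sub, reduceSq_natCast_val, reduceSq_natCast_val,
    sub_eq_zero] at hpst
  rw [hpst]

theorem mkUnit_inj {a b : (ZMod p)ˣ} {s t : ZMod p} :
    mkUnit a s = mkUnit b t ↔ a = b ∧ s = t :=
  mkUnit_injective.eq_iff.trans Prod.mk_inj

theorem mkUnit_bijective : Function.Bijective (Function.uncurry (mkUnit (p := p))) := by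
  have hp := (Fact.out : p.Prime)
  rw [Fintype.bijective_iff_injective_and_card]
  refine ⟨mkUnit_injective, ?_⟩
  rw [Fintype.card_prod, card_units_eq_totient, card_units_eq_totient, card,
    Nat.totient_prime_pow hp two_pos, Nat.totient_prime hp]
  ring

theorem prod_mkUnit {ι : Type*} (s : Finset ι) (a : ι → (ZMod p)ˣ) (t : ι → ZMod p) :
    ∏ i ∈ s, mkUnit (a i) (t i) = mkUnit (∏ i ∈ s, a i) (∑ i ∈ s, t i) := by
  simp only [mkUnit, prod_mul_distrib, map_prod, AddChar.map_sum_eq_prod]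

theorem stdAddChar_mkUnit (a : (ZMod p)ˣ) (t : ZMod p) :
    stdAddChar (mkUnit a t : ZMod (p ^ 2)) =
      stdAddChar (teichmuller (a : ZMod p)) * stdAddChar ((a : ZMod p) * t) := by
  rw [coe_mkUnit, AddChar.map_add_eq_mul, stdAddChar_natCast_mul, map_mul,
    reduceSq_teichmuller, reduceSq_natCast_val]

theorem Kl_mkUnit_one_eq_sum (n : ℕ) (s : ZMod p) :
    Kl n (p ^ 2) (mkUnit 1 s) = ∑ a : Fin n → (ZMod p)ˣ,
      if ∏ i, a i = 1 then (∏ i, stdAddChar (teichmuller (a i : ZMod p))) *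
        ∑ t : Fin n → ZMod p,
          (if ∑ i, t i = s then stdAddChar (∑ i, (a i : ZMod p) * t i) else 0)
      else 0 := by
  let E : (Fin n → (ZMod p)ˣ) × (Fin n → ZMod p) ≃ (Fin n → (ZMod (p ^ 2))ˣ) :=
    (Equiv.arrowProdEquivProdArrow _ _ _).symm.trans
      (Equiv.piCongrRight fun _ => Equiv.ofBijective _ mkUnit_bijective)
  rw [Kl_eq_sum_stdAddChar, ← E.sum_comp, Fintype.sum_prod_type]
  refine sum_congr rfl fun a _ => ?_
  simp only [E, Equiv.trans_apply, Equiv.piCongrRight_apply, Equiv.arrowProdEquivProdArrow,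
    Equiv.coe_fn_symm_mk, Pi.map_apply, Equiv.ofBijective_apply, Function.uncurry_apply_pair,
    prod_mkUnit, mkUnit_inj, stdAddChar_mkUnit, prod_mul_distrib, AddChar.map_sum_eq_prod]
  split_ifs with ha
  · simp only [ha, true_and, mul_sum, mul_ite, mul_zero]
  · simp only [ha, false_and, if_false, sum_const_zero]

theorem Kl_mkUnit_one (n : ℕ) (s : ZMod p) :
    Kl (n + 1) (p ^ 2) (mkUnit 1 s) = (p : ℂ) ^ n * ∑ b : (ZMod p)ˣ,
      if b ^ (n + 1) = 1 then
        stdAddChar (teichmuller (b : ZMod p)) ^ (n + 1) * stdAddChar ((b : ZMod p) * s)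
      else 0 := by
  simp only [Kl_mkUnit_one_eq_sum, AddChar.sum_ite_sum_eq (isPrimitive_stdAddChar p), card,
    Units.val_inj, mul_ite, mul_zero]
  simp only [← ite_and]
  simp only [and_comm (a := ∏ _, _ = _), ite_and]
  rw [Fin.sum_ite_forall_eq_apply_zero, mul_sum]
  refine sum_congr rfl fun b _ => ?_
  simp only [prod_const, card_univ, Fintype.card_fin]
  split_ifs <;> ring

end SquareModulus

end ZMod

theorem stmt1 (p : ℕ) [Fact p.Prime] (d : ℕ) (hd : 1 ≤ d)
    (r : (ZMod (p ^ 2))ˣ)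
    (hr : ZMod.castHom (dvd_pow_self p (by norm_num : (2 : ℕ) ≠ 0)) (ZMod p)
        (r : ZMod (p ^ 2)) = 1) :
    Kl d (p ^ 2) r ≠ 0 := by
  obtain ⟨n, rfl⟩ : ∃ n, d = n + 1 := ⟨d - 1, by omega⟩
  obtain ⟨⟨a, s⟩, rfl⟩ := ZMod.mkUnit_bijective.surjective r
  obtain rfl : a = 1 := Units.val_eq_one.mp (by rwa [← ZMod.reduceSq_mkUnit a s])
  have hp := (Fact.out : p.Prime)
  have as_stdAddChar (b : (ZMod p)ˣ) :
      ZMod.stdAddChar (ZMod.teichmuller (b : ZMod p)) ^ (n + 1) *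
          ZMod.stdAddChar ((b : ZMod p) * s) =
        ZMod.stdAddChar ((n + 1) • ZMod.teichmuller (b : ZMod p) +
          (p : ZMod (p ^ 2)) * (((b : ZMod p) * s).val : ZMod (p ^ 2))) := by
    rw [AddChar.map_add_eq_mul, AddChar.map_nsmul_eq_pow, ZMod.stdAddChar_natCast_mul,
      ZMod.reduceSq_natCast_val]
  rw [Function.uncurry_apply_pair, ZMod.Kl_mkUnit_one, ← sum_filter]
  refine mul_ne_zero (pow_ne_zero _ (Nat.cast_ne_zero.mpr hp.ne_zero)) ?_
  simp only [as_stdAddChar]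
  refine ZMod.sum_stdAddChar_ne_zero two_ne_zero _ ⟨1, by simp⟩ ?_
  calc #(univ.filter fun b : (ZMod p)ˣ => b ^ (n + 1) = 1) ≤ Fintype.card (ZMod p)ˣ :=
        card_filter_le _ _
    _ < p := by rw [ZMod.card_units p]; exact Nat.sub_lt hp.pos one_pos
end

section
/- Let p be an odd prime and m a positive integer with p ∤ m. Let η_1, …, η_k be odd primitive Dirichlet characters modulo m (i.e., η_t(−1) = −1 and each η_t has conductor m) and let a_1, …, a_k ∈ ℂ be constants such that Σ_{t=1}^{k} a_t η_t(n) = 0 for every positive integer n with gcd(n, p) = 1 and n^{p−1} ≢ 1 (mod p²). Then Σ_{t=1}^{k} a_t τ(η_t) η_t(p²) = 0, and moreover for every odd prime q with q ∤ pm one has Σ_{t=1}^{k} a_t τ(η_t) η_t(p² q) = 0. (This is the case K = ℚ of the paper's proposition on determination of characters by their norm averages.) -/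
open scoped BigOperators

/-- Gauss sum of a Dirichlet character mod `M`: `τ(φ) = Σ_{a mod M} φ(a) e(a/M)`. -/
noncomputable def tau {M : ℕ} (φ : DirichletCharacter ℂ M) : ℂ :=
  ∑ᶠ a : ZMod M, φ a * e ((a.val : ℂ) / M)

/-!
The hypothesis already forces `Σ a_t η_t` to vanish on every residue class `c` mod `m`: by
the Chinese remainder theorem some `n > 0` satisfies `n ≡ c (mod m)` and `n ≡ 1 + p (mod p²)`,
and `(1 + p)^(p-1) ≡ 1 + (p - 1) p ≢ 1 (mod p²)`. Expanding `τ(η_t) η_t(x) = Σ_b η_t(b x) e(b/m)`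
then writes `Σ a_t τ(η_t) η_t(x)` as a combination of these vanishing values, for every `x`.
-/

lemma one_add_pow_of_mul_self_eq_zero {R : Type*} [CommRing R] {x : R} (hx : x * x = 0) (k : ℕ) :
    (1 + x) ^ k = 1 + k * x := by
  induction k with
  | zero => simp
  | succ k ih =>
    rw [pow_succ, ih]
    push_cast
    linear_combination (k : R) * hx

lemma ZMod.one_add_prime_pow_sub_one_ne_one (p : ℕ) [Fact p.Prime] :
    (1 + p : ZMod (p ^ 2)) ^ (p - 1) ≠ 1 := by
  have hp : p.Prime := Fact.out
  have hsq : (p : ZMod (p ^ 2)) * p = 0 := by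
    rw [← Nat.cast_mul, ← sq, ZMod.natCast_self]
  rw [one_add_pow_of_mul_self_eq_zero hsq, Ne, add_eq_left, ← Nat.cast_mul,
    ZMod.natCast_eq_zero_iff, sq, Nat.mul_dvd_mul_iff_right hp.pos]
  exact fun hdvd => (Nat.sub_lt hp.pos one_pos).not_ge
    (Nat.le_of_dvd (Nat.sub_pos_of_lt hp.one_lt) hdvd)

lemma Nat.exists_pos_natCast_eq_and_natCast_eq {m n : ℕ} [NeZero m] [NeZero n]
    (h : m.Coprime n) (c : ZMod m) (d : ZMod n) :
    ∃ N : ℕ, 0 < N ∧ (N : ZMod m) = c ∧ (N : ZMod n) = d := by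
  obtain ⟨k, hkm, hkn⟩ := Nat.chineseRemainder h c.val d.val
  refine ⟨k + m * n, Nat.add_pos_right _ (Nat.mul_pos (NeZero.pos m) (NeZero.pos n)), ?_, ?_⟩
  · rw [Nat.cast_add, Nat.cast_mul, ZMod.natCast_self, zero_mul, add_zero,
      (ZMod.natCast_eq_natCast_iff _ _ _).mpr hkm, ZMod.natCast_zmod_val]
  · rw [Nat.cast_add, Nat.cast_mul, ZMod.natCast_self, mul_zero, add_zero,
      (ZMod.natCast_eq_natCast_iff _ _ _).mpr hkn, ZMod.natCast_zmod_val]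

lemma ZMod.eq_zero_of_forall_pow_sub_one_ne_one {p m : ℕ} [Fact p.Prime] [NeZero m]
    (hpm : ¬ p ∣ m) {M : Type*} [Zero M] (f : ZMod m → M)
    (hf : ∀ n : ℕ, 0 < n → Nat.gcd n p = 1 → (n : ZMod (p ^ 2)) ^ (p - 1) ≠ 1 → f n = 0)
    (c : ZMod m) : f c = 0 := by
  have hp : p.Prime := Fact.out
  have hcop : m.Coprime (p ^ 2) :=
    (Nat.coprime_comm.mp (hp.coprime_iff_not_dvd.mpr hpm)).pow_right 2
  obtain ⟨n, hn, hnm, hnp⟩ := Nat.exists_pos_natCast_eq_and_natCast_eq hcop c (1 + p)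
  have hunit : IsUnit (n : ZMod (p ^ 2)) := by
    rw [hnp]
    exact IsNilpotent.isUnit_one_add ⟨2, by rw [← Nat.cast_pow, ZMod.natCast_self]⟩
  have hgcd : Nat.gcd n p = 1 :=
    ((ZMod.isUnit_iff_coprime n (p ^ 2)).mp hunit).coprime_dvd_right (dvd_pow_self p two_ne_zero)
  rw [← hnm]
  exact hf n hn hgcd (hnp ▸ ZMod.one_add_prime_pow_sub_one_ne_one p)

lemma tau_mul_apply {m : ℕ} [NeZero m] (χ : DirichletCharacter ℂ m) (x : ZMod m) :
    tau χ * χ x = ∑ b : ZMod m, e (b.val / m) * χ (b * x) := by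
  rw [tau, finsum_eq_sum_of_fintype, Finset.sum_mul]
  refine Finset.sum_congr rfl fun b _ => ?_
  rw [map_mul]
  ring

lemma sum_mul_tau_mul_eq_zero {ι : Type*} [Fintype ι] {m : ℕ} [NeZero m]
    (η : ι → DirichletCharacter ℂ m) (a : ι → ℂ) (h : ∀ c, ∑ t, a t * η t c = 0)
    (x : ZMod m) : ∑ t, a t * tau (η t) * η t x = 0 := by
  simp_rw [mul_assoc, tau_mul_apply, Finset.mul_sum, mul_left_comm (a _)]
  rw [Finset.sum_comm]
  exact Finset.sum_eq_zero fun b _ => by rw [← Finset.mul_sum, h, mul_zero]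

theorem stmt12_general (p : ℕ) [Fact p.Prime]
    (m : ℕ) (hm : 0 < m) (hpm : ¬ p ∣ m)
    (k : ℕ) (η : Fin k → DirichletCharacter ℂ m) (a : Fin k → ℂ)
    (hvanish : ∀ n : ℕ, 0 < n → Nat.gcd n p = 1 → (n : ZMod (p ^ 2)) ^ (p - 1) ≠ 1 →
      ∑ t, a t * η t ((n : ZMod m)) = 0) :
    (∑ t, a t * tau (η t) * η t (((p ^ 2 : ℕ) : ZMod m))) = 0 ∧
      ∀ q : ℕ, q.Prime → Odd q → ¬ q ∣ p * m →
        (∑ t, a t * tau (η t) * η t (((p ^ 2 * q : ℕ) : ZMod m))) = 0 := by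
  have : NeZero m := ⟨hm.ne'⟩
  have hcomb : ∀ c : ZMod m, ∑ t, a t * η t c = 0 :=
    ZMod.eq_zero_of_forall_pow_sub_one_ne_one hpm (fun c => ∑ t, a t * η t c) hvanish
  exact ⟨sum_mul_tau_mul_eq_zero η a hcomb _,
    fun q _ _ _ => sum_mul_tau_mul_eq_zero η a hcomb _⟩

theorem stmt12 (p : ℕ) [Fact p.Prime] (hodd : Odd p)
    (m : ℕ) (hm : 0 < m) (hpm : ¬ p ∣ m)
    (k : ℕ) (η : Fin k → DirichletCharacter ℂ m) (a : Fin k → ℂ)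
    (hoddchar : ∀ t, η t (-1) = -1)
    (hprim : ∀ t, (η t).IsPrimitive)
    (hvanish : ∀ n : ℕ, 0 < n → Nat.gcd n p = 1 → (n : ZMod (p ^ 2)) ^ (p - 1) ≠ 1 →
      ∑ t, a t * η t ((n : ZMod m)) = 0) :
    (∑ t, a t * tau (η t) * η t (((p ^ 2 : ℕ) : ZMod m))) = 0 ∧
      ∀ q : ℕ, q.Prime → Odd q → ¬ q ∣ p * m →
        (∑ t, a t * tau (η t) * η t (((p ^ 2 * q : ℕ) : ZMod m))) = 0 :=
  stmt12_general p m hm hpm k η a hvanish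
end

section
/- Let p be an odd prime, m a positive integer with p ∤ m, and η an odd primitive Dirichlet character modulo m with values in ℂ. Then the subfield of ℂ generated over ℚ by the values η(q), as q ranges over the odd primes not dividing pm, is contained in the subfield of ℂ generated over ℚ by the values η(n), as n ranges over the positive integers with gcd(n, p) = 1 and n^{p−1} ≢ 1 (mod p²). (This is the case K = ℚ of the paper's theorem that ℚ(η_f′) ⊆ ℚ(c_η°).) -/
/-!
Every generator `η q` on the left is already a generator on the right: by the Chinese remainder
theorem pick `n ≡ q (mod m)` and `n ≡ 1 + p (mod p²)`. Then `η n = η q`, `n` is prime to `p`, and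
`n ^ (p - 1) ≡ 1 + (p - 1) p ≢ 1 (mod p²)`.
-/

theorem one_add_pow_of_sq_eq_zero {R : Type*} [CommSemiring R] {x : R} (hx : x ^ 2 = 0) (k : ℕ) :
    (1 + x) ^ k = 1 + k * x := by
  induction k with
  | zero => simp
  | succ k ih =>
    rw [pow_succ, ih, Nat.cast_succ]
    calc (1 + k * x) * (1 + x) = 1 + (k + 1) * x + k * x ^ 2 := by ring
      _ = 1 + (k + 1) * x := by rw [hx, mul_zero, add_zero]

theorem ZMod.one_add_natCast_pow_pred_ne_one {p : ℕ} (hp : 1 < p) :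
    (1 + p : ZMod (p ^ 2)) ^ (p - 1) ≠ 1 := by
  have hsq : (p : ZMod (p ^ 2)) ^ 2 = 0 := by exact_mod_cast ZMod.natCast_self (p ^ 2)
  rw [one_add_pow_of_sq_eq_zero hsq, Ne, add_eq_left]
  intro h
  have hdvd : p ^ 2 ∣ (p - 1) * p := by
    rw [← ZMod.natCast_eq_zero_iff]
    exact_mod_cast h
  rw [sq, Nat.mul_dvd_mul_iff_right (by omega)] at hdvd
  exact absurd (Nat.le_of_dvd (by omega) hdvd) (by omega)

theorem Nat.exists_modEq_pow_pred_ne_one {p m : ℕ} (hp : p.Prime) (hpm : ¬ p ∣ m) (a : ℕ) :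
    ∃ n : ℕ, 0 < n ∧ n.gcd p = 1 ∧ (n : ZMod (p ^ 2)) ^ (p - 1) ≠ 1 ∧ n ≡ a [MOD m] := by
  have hcop : m.Coprime (p ^ 2) := (((hp.coprime_iff_not_dvd).2 hpm).pow_left 2).symm
  obtain ⟨n, hnm, hnp2⟩ := Nat.chineseRemainder hcop a (1 + p)
  have hnp : n ≡ 1 [MOD p] := (hnp2.of_dvd (dvd_pow_self p two_ne_zero)).trans (Nat.add_mod_right 1 p)
  have hgcd : n.gcd p = 1 := by rw [hnp.gcd_eq, Nat.gcd_one_left]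
  refine ⟨n, Nat.pos_of_ne_zero ?_, hgcd, ?_, hnm⟩
  · rintro rfl
    rw [Nat.gcd_zero_left] at hgcd
    exact hp.one_lt.ne' hgcd
  · rw [(ZMod.natCast_eq_natCast_iff _ _ _).2 hnp2, Nat.cast_add, Nat.cast_one]
    exact ZMod.one_add_natCast_pow_pred_ne_one hp.one_lt

theorem stmt13_general (p : ℕ) [Fact p.Prime]
    (m : ℕ) (hpm : ¬ p ∣ m)
    (η : DirichletCharacter ℂ m) :
    Subfield.closure {z : ℂ | ∃ q : ℕ, q.Prime ∧ Odd q ∧ ¬ q ∣ p * m ∧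
        z = η ((q : ZMod m))} ≤
      Subfield.closure {z : ℂ | ∃ n : ℕ, 0 < n ∧ Nat.gcd n p = 1 ∧
        (n : ZMod (p ^ 2)) ^ (p - 1) ≠ 1 ∧ z = η ((n : ZMod m))} := by
  refine Subfield.closure_mono ?_
  rintro _ ⟨q, -, -, -, rfl⟩
  obtain ⟨n, hn, hgcd, hne, hnq⟩ := Nat.exists_modEq_pow_pred_ne_one Fact.out hpm q
  exact ⟨n, hn, hgcd, hne, by rw [(ZMod.natCast_eq_natCast_iff _ _ _).2 hnq]⟩

theorem stmt13 (p : ℕ) [Fact p.Prime] (hodd : Odd p)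
    (m : ℕ) (hm : 0 < m) (hpm : ¬ p ∣ m)
    (η : DirichletCharacter ℂ m) (hoddchar : η (-1) = -1) (hprim : η.IsPrimitive) :
    Subfield.closure {z : ℂ | ∃ q : ℕ, q.Prime ∧ Odd q ∧ ¬ q ∣ p * m ∧
        z = η ((q : ZMod m))} ≤
      Subfield.closure {z : ℂ | ∃ n : ℕ, 0 < n ∧ Nat.gcd n p = 1 ∧
        (n : ZMod (p ^ 2)) ^ (p - 1) ≠ 1 ∧ z = η ((n : ZMod m))} :=
  stmt13_general p m hpm η
end
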